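/- Let A be a finite-dimensional involutory Hopf algebra over ℂ. Then the trace character χ is a right integral on the dual Hopf algebra: for every a ∈ A, ∑ a₍₁₎ · χ(a₍₂₎) = χ(a) · 1, i.e., (id ⊗ χ) ∘ Δ = χ(·)·1 as maps A → A. -/

import Mathlib

/-!
STATEMENT 2: For a finite-dimensional involutory Hopf algebra A over ℂ, the trace character
χ is a right integral on the dual Hopf algebra: for every a ∈ A,
∑ a₍₁₎ · χ(a₍₂₎) = χ(a) · 1, i.e. (id ⊗ χ) ∘ Δ = χ(·)·1.
-/

open HopfAlgebra TensorProduct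

/-- The trace character of the left regular representation:
`χ(a)` is the trace of the ℂ-linear map `x ↦ a * x`. -/
noncomputable def traceChar (A : Type*) [Ring A] [Algebra ℂ A] : A →ₗ[ℂ] ℂ :=
  (LinearMap.trace ℂ A) ∘ₗ (LinearMap.mul ℂ A)

/-
Applying an arbitrary functional `g`, the claim becomes `Tr L_{a ↼ g} = g(1) Tr L_a`, where
`a ↼ g = ∑ g(a₁) a₂`. Let `W(x ⊗ y) = Δ(y)(x ⊗ 1)` and `σ = (S ⊗ id) ∘ Δ`. Since `S² = id`, also
`∑ z₂ S(z₁) = ε(z) 1`, hence `W (σ z) = 1 ⊗ z`; and `W` intertwines `id ⊗ L_a` with `L_{Δa}`. So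
`L_{a ↼ g} = (g ⊗ id) ∘ W ∘ (id ⊗ L_a) ∘ σ`, and by cyclicity its trace is that of an operator on
`A ⊗ A`. Its partial trace over the first factor is `g(1) L_a`: summing over a basis `eᵢ`,
`∑ᵢ g(y₁ eᵢ) eᵢ*(S y₂) y₃ = g(y₁ S y₂) y₃ = g(1) y`.
-/

open Coalgebra

namespace TensorProduct

variable {R M N P : Type*} [CommSemiring R] [AddCommMonoid M] [Module R M]
  [AddCommMonoid N] [Module R N] [AddCommMonoid P] [Module R P]

def sliceLeft (f : M →ₗ[R] R) : M ⊗[R] N →ₗ[R] N := lift (LinearMap.lsmul R N ∘ₗ f)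

@[simp]
lemma sliceLeft_tmul (f : M →ₗ[R] R) (m : M) (n : N) : sliceLeft f (m ⊗ₜ n) = f m • n := rfl

lemma sliceLeft_rTensor (f : M →ₗ[R] R) (φ : P →ₗ[R] M) (t : P ⊗[R] N) :
    sliceLeft f (φ.rTensor N t) = sliceLeft (f ∘ₗ φ) t := by
  induction t using TensorProduct.induction_on with
  | zero => simp
  | tmul p n => simp
  | add t₁ t₂ h₁ h₂ => simp [h₁, h₂]

lemma map_sliceLeft (f : M →ₗ[R] R) (φ : N →ₗ[R] P) (t : M ⊗[R] N) :
    φ (sliceLeft f t) = sliceLeft f (φ.lTensor M t) := by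
  induction t using TensorProduct.induction_on with
  | zero => simp
  | tmul m n => simp
  | add t₁ t₂ h₁ h₂ => simp [h₁, h₂]

lemma sliceLeft_mul_one_tmul {A B : Type*} [Semiring A] [Algebra R A] [Semiring B] [Algebra R B]
    (f : A →ₗ[R] R) (t : A ⊗[R] B) (b : B) : sliceLeft f (t * (1 ⊗ₜ b)) = sliceLeft f t * b := by
  induction t using TensorProduct.induction_on with
  | zero => simp
  | tmul x y => simp
  | add t₁ t₂ h₁ h₂ => simp [add_mul, h₁, h₂]

lemma apply_rid_lTensor (f : M →ₗ[R] R) (h : N →ₗ[R] R) (t : M ⊗[R] N) :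
    f (TensorProduct.rid R M (h.lTensor M t)) = h (sliceLeft f t) := by
  induction t using TensorProduct.induction_on with
  | zero => simp
  | tmul m n => simp [mul_comm]
  | add t₁ t₂ h₁ h₂ => simp [h₁, h₂]

variable {ι κ : Type*}

lemma _root_.Module.Basis.tensorProduct_repr_eq_repr_sliceLeft (b : Module.Basis ι R M)
    (c : Module.Basis κ R N) (t : M ⊗[R] N) (i : ι) (j : κ) :
    (b.tensorProduct c).repr t (i, j) = c.repr (sliceLeft (b.coord i) t) j := by
  induction t using TensorProduct.induction_on with
  | zero => simp
  | tmul m n => simp [mul_comm]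
  | add t₁ t₂ h₁ h₂ => simp [h₁, h₂]

variable [Fintype ι]

noncomputable def partialTrace (b : Module.Basis ι R M) (F : M ⊗[R] N →ₗ[R] M ⊗[R] N) :
    N →ₗ[R] N :=
  ∑ i, sliceLeft (b.coord i) ∘ₗ F ∘ₗ mk R M N (b i)

lemma partialTrace_apply (b : Module.Basis ι R M) (F : M ⊗[R] N →ₗ[R] M ⊗[R] N) (n : N) :
    partialTrace b F n = ∑ i, sliceLeft (b.coord i) (F (b i ⊗ₜ n)) := by
  simp [partialTrace]

lemma partialTrace_comp_lTensor (b : Module.Basis ι R M) (F : M ⊗[R] N →ₗ[R] M ⊗[R] N)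
    (g : N →ₗ[R] N) : partialTrace b (F ∘ₗ g.lTensor M) = partialTrace b F ∘ₗ g := by
  ext n
  simp [partialTrace_apply]

theorem trace_eq_trace_partialTrace {R M N : Type*} [CommRing R] [AddCommGroup M] [Module R M]
    [AddCommGroup N] [Module R N] [Module.Free R N] [Module.Finite R N]
    (b : Module.Basis ι R M) (F : M ⊗[R] N →ₗ[R] M ⊗[R] N) :
    LinearMap.trace R (M ⊗[R] N) F = LinearMap.trace R N (partialTrace b F) := by
  classical
  let c := Module.Free.chooseBasis R N
  rw [LinearMap.trace_eq_matrix_trace R (b.tensorProduct c),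
    LinearMap.trace_eq_matrix_trace R c, Matrix.trace, Matrix.trace, Fintype.sum_prod_type,
    Finset.sum_comm]
  simp [LinearMap.toMatrix_apply, Module.Basis.tensorProduct_repr_eq_repr_sliceLeft,
    partialTrace_apply]

end TensorProduct

namespace Coalgebra

variable {R C : Type*} [CommSemiring R] [AddCommMonoid C] [Module R C] [Coalgebra R C]

def rightHit (f : C →ₗ[R] R) : C →ₗ[R] C := sliceLeft f ∘ₗ comul

lemma rightHit_apply {ι : Type*} {c : C} (r : Repr R c ι) (f : C →ₗ[R] R) :
    rightHit f c = ∑ i ∈ r.index, f (r.left i) • r.right i := by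
  simp [rightHit, ← r.eq]

@[simp]
lemma rightHit_counit : rightHit (counit : C →ₗ[R] R) = LinearMap.id :=
  lift_lsmul_comp_counit_comp_comul

lemma rightHit_smul (s : R) (f : C →ₗ[R] R) : rightHit (s • f) = s • rightHit f := by
  ext c
  simp [rightHit_apply (ℛ R c), Finset.smul_sum, smul_smul]

lemma rightHit_sum {ι : Type*} (s : Finset ι) (f : ι → C →ₗ[R] R) :
    rightHit (∑ i ∈ s, f i) = ∑ i ∈ s, rightHit (f i) := by
  ext c
  simp only [rightHit_apply (ℛ R c), LinearMap.sum_apply, Finset.sum_smul]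
  exact Finset.sum_comm

lemma rightHit_comp_rightHit (f h : C →ₗ[R] R) :
    rightHit f ∘ₗ rightHit h = rightHit (LinearMap.mul' R R ∘ₗ map h f ∘ₗ comul) := by
  have sliceLeft_sliceLeft : sliceLeft f ∘ₗ sliceLeft h ∘ₗ
      (_root_.TensorProduct.assoc R C C C).toLinearMap
        = sliceLeft (LinearMap.mul' R R ∘ₗ map h f) := by
    ext p q r
    simp [mul_smul]
  ext c
  calc rightHit f (rightHit h c)
      = sliceLeft f (sliceLeft h (comul.lTensor C (comul c))) := by
        rw [← map_sliceLeft]; rfl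
    _ = sliceLeft f
          (sliceLeft h (_root_.TensorProduct.assoc R C C C (comul.rTensor C (comul c)))) := by
        rw [coassoc_apply]
    _ = sliceLeft (LinearMap.mul' R R ∘ₗ map h f) (comul.rTensor C (comul c)) :=
        LinearMap.congr_fun sliceLeft_sliceLeft _
    _ = rightHit (LinearMap.mul' R R ∘ₗ map h f ∘ₗ comul) c := sliceLeft_rTensor _ _ _

end Coalgebra

namespace HopfAlgebra

section Semiring

variable {R A : Type*} [CommSemiring R] [Semiring A] [HopfAlgebra R A]

lemma sum_right_mul_antipode_left_eq_smul (hS : ∀ a : A, antipode R (antipode R a) = a)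
    {a : A} {ι : Type*} (r : Repr R a ι) :
    ∑ i ∈ r.index, r.right i * antipode R (r.left i) = counit (R := R) a • 1 := by
  simpa [antipode_mul_antidistrib, hS] using congr(antipode R $(sum_mul_antipode_eq_smul r))

lemma mul'_comp_comm_comp_rTensor_antipode_comp_comul
    (hS : ∀ a : A, antipode R (antipode R a) = a) :
    LinearMap.mul' R A ∘ₗ (TensorProduct.comm R A A).toLinearMap ∘ₗ (antipode R).rTensor A ∘ₗ comul
      = Algebra.linearMap R A ∘ₗ counit := by
  ext a
  simp [← (ℛ R a).eq, sum_right_mul_antipode_left_eq_smul hS, Algebra.smul_def]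

noncomputable def comulMulRight : A ⊗[R] A →ₗ[R] A ⊗[R] A :=
  lift (((LinearMap.mul R (A ⊗[R] A)).flip ∘ₗ
    Algebra.TensorProduct.includeLeft.toLinearMap).compl₂ comul)

@[simp]
lemma comulMulRight_tmul (x y : A) : comulMulRight (R := R) (x ⊗ₜ y) = comul y * (x ⊗ₜ 1) := rfl

lemma comulMulRight_comp_lTensor_mulLeft (a : A) :
    comulMulRight ∘ₗ (LinearMap.mulLeft R a).lTensor A
      = LinearMap.mulLeft R (comul a) ∘ₗ comulMulRight := by
  ext x y
  simp [Bialgebra.comul_mul, mul_assoc]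

lemma comulMulRight_rTensor_antipode_comul (hS : ∀ a : A, antipode R (antipode R a) = a)
    (z : A) : comulMulRight ((antipode R).rTensor A (comul z)) = 1 ⊗ₜ[R] z := by
  let μSop : A ⊗[R] A →ₗ[R] A :=
    LinearMap.mul' R A ∘ₗ (TensorProduct.comm R A A).toLinearMap ∘ₗ (antipode R).rTensor A
  have hW : comulMulRight ∘ₗ (antipode R).rTensor A
      = μSop.rTensor A ∘ₗ (TensorProduct.assoc R A A A).symm.toLinearMap ∘ₗ comul.lTensor A := by
    ext p q
    simp [μSop, ← (ℛ R q).eq, Finset.sum_mul, tmul_sum]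
  calc comulMulRight ((antipode R).rTensor A (comul z))
      = μSop.rTensor A ((TensorProduct.assoc R A A A).symm (comul.lTensor A (comul z))) :=
        LinearMap.congr_fun hW _
    _ = (μSop ∘ₗ comul).rTensor A (comul z) := by
        rw [coassoc_symm_apply]
        exact (LinearMap.rTensor_comp_apply ..).symm
    _ = 1 ⊗ₜ z := by
        simp only [μSop, LinearMap.comp_assoc,
          mul'_comp_comm_comp_rTensor_antipode_comp_comul hS, LinearMap.rTensor_comp_apply,
          rTensor_counit_comul, LinearMap.rTensor_tmul, Algebra.linearMap_apply, map_one]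

lemma sliceLeft_comulMulRight_tmul (g : A →ₗ[R] R) (x y : A) :
    sliceLeft g (comulMulRight (x ⊗ₜ y)) = rightHit (g ∘ₗ LinearMap.mulRight R x) y := by
  simp [rightHit_apply (ℛ R y), ← (ℛ R y).eq, Finset.sum_mul]

lemma mulLeft_rightHit (hS : ∀ a : A, antipode R (antipode R a) = a) (g : A →ₗ[R] R) (a : A) :
    LinearMap.mulLeft R (rightHit g a) = sliceLeft g ∘ₗ comulMulRight ∘ₗ
      (LinearMap.mulLeft R a).lTensor A ∘ₗ (antipode R).rTensor A ∘ₗ comul := by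
  ext z
  have intertwine := LinearMap.congr_fun (comulMulRight_comp_lTensor_mulLeft a)
    ((antipode R).rTensor A (comul z))
  simp only [LinearMap.comp_apply] at intertwine ⊢
  rw [intertwine, comulMulRight_rTensor_antipode_comul hS, LinearMap.mulLeft_apply,
    LinearMap.mulLeft_apply, sliceLeft_mul_one_tmul]
  rfl

lemma partialTrace_rTensor_antipode_comul_comp_sliceLeft {ι : Type*} [Fintype ι]
    (b : Module.Basis ι R A) (g : A →ₗ[R] R) :
    partialTrace b ((antipode R).rTensor A ∘ₗ comul ∘ₗ sliceLeft g ∘ₗ comulMulRight)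
      = g 1 • LinearMap.id := by
  have collapse : ∑ i, LinearMap.mul' R R ∘ₗ
      map (g ∘ₗ LinearMap.mulRight R (b i)) (b.coord i ∘ₗ antipode R) ∘ₗ comul
      = g 1 • counit := by
    ext c
    have sum_coord (p v : A) : ∑ i, g (p * b i) * b.repr v i = g (p * v) := by
      simpa [mul_comm] using
        LinearMap.congr_fun (b.sum_dual_apply_smul_coord (g ∘ₗ LinearMap.mulLeft R p)) v
    let r := ℛ R c
    calc _ = ∑ j ∈ r.index, g (r.left j * antipode R (r.right j)) := by
          simp [← r.eq, LinearMap.sum_apply, Finset.sum_comm (γ := ι), sum_coord]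
      _ = g 1 * counit c := by
          rw [← map_sum, sum_mul_antipode_eq_smul, map_smul, smul_eq_mul, mul_comm]
  ext y
  calc _ = ∑ i, rightHit (b.coord i ∘ₗ antipode R)
          (rightHit (g ∘ₗ LinearMap.mulRight R (b i)) y) := by
        simp only [partialTrace_apply, LinearMap.comp_apply, sliceLeft_rTensor,
          sliceLeft_comulMulRight_tmul]
        rfl
    _ = rightHit (g 1 • counit) y := by
        rw [← collapse, rightHit_sum, LinearMap.sum_apply]
        exact Finset.sum_congr rfl fun i _ => LinearMap.congr_fun (rightHit_comp_rightHit _ _) y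
    _ = g 1 • y := by
        rw [rightHit_smul, rightHit_counit]
        rfl

end Semiring

variable {R A : Type*} [CommRing R] [Ring A] [HopfAlgebra R A] [Module.Free R A]
  [Module.Finite R A]

theorem trace_mulLeft_rightHit (hS : ∀ a : A, antipode R (antipode R a) = a)
    (g : A →ₗ[R] R) (a : A) :
    LinearMap.trace R A (LinearMap.mulLeft R (rightHit g a))
      = g 1 * LinearMap.trace R A (LinearMap.mulLeft R a) := by
  let σ : A →ₗ[R] A ⊗[R] A := (antipode R).rTensor A ∘ₗ comul
  let ρ : A ⊗[R] A →ₗ[R] A := sliceLeft g ∘ₗ comulMulRight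
  let b := Module.Free.chooseBasis R A
  calc LinearMap.trace R A (LinearMap.mulLeft R (rightHit g a))
      = LinearMap.trace R A ((ρ ∘ₗ (LinearMap.mulLeft R a).lTensor A) ∘ₗ σ) := by
        rw [mulLeft_rightHit hS]; rfl
    _ = LinearMap.trace R (A ⊗[R] A) (σ ∘ₗ ρ ∘ₗ (LinearMap.mulLeft R a).lTensor A) :=
        LinearMap.trace_comp_comm' _ _
    _ = LinearMap.trace R A (partialTrace b (σ ∘ₗ ρ) ∘ₗ LinearMap.mulLeft R a) := by
        rw [trace_eq_trace_partialTrace b, ← partialTrace_comp_lTensor]; rfl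
    _ = g 1 * LinearMap.trace R A (LinearMap.mulLeft R a) := by
        simp only [σ, ρ, LinearMap.comp_assoc]
        rw [partialTrace_rTensor_antipode_comul_comp_sliceLeft, LinearMap.smul_comp,
          LinearMap.id_comp, map_smul, smul_eq_mul]

theorem rid_lTensor_trace_comp_mul_comul (hS : ∀ a : A, antipode R (antipode R a) = a) (a : A) :
    TensorProduct.rid R A ((LinearMap.trace R A ∘ₗ LinearMap.mul R A).lTensor A (comul a))
      = LinearMap.trace R A (LinearMap.mulLeft R a) • 1 := by
  rw [← sub_eq_zero, ← Module.forall_dual_apply_eq_zero_iff R]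
  intro g
  rw [map_sub, sub_eq_zero, apply_rid_lTensor, map_smul, smul_eq_mul, mul_comm]
  exact trace_mulLeft_rightHit hS g a

end HopfAlgebra

theorem traceChar_is_right_integral
    (A : Type*) [Ring A] [HopfAlgebra ℂ A] [FiniteDimensional ℂ A]
    (hinv : ∀ a : A, antipode (R := ℂ) (antipode (R := ℂ) a) = a) (a : A) :
    (TensorProduct.rid ℂ A)
        ((LinearMap.lTensor A (traceChar A)) (Coalgebra.comul (R := ℂ) a)) =
      traceChar A a • (1 : A) :=
  rid_lTensor_trace_comp_mul_comul hinv a
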